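/- arXiv:math/9811040 — 3 statements merged into one kernel-verified Lean document; each statement's English description precedes it below -/
import Mathlib

section
/- Let φ, ψ : ℝ → ℂ be Schwartz functions. Then ∫_ℝ H(𝓕φ)(t)·ψ(t) dt = ∫_ℝ H(φ)(t)·(𝓕ψ)(t) dt, where both integrals converge absolutely. (This expresses that the conductor operator H commutes with the Fourier transform.) -/
/-!
Write `L h` for `t ↦ log|t| · h t`. By definition `H h = L h + 𝓕 (L (𝓕⁻ h))`, and since `log|·|`
is even and `𝓕⁻ h = 𝓕 h ∘ neg`, also `H h = L h + 𝓕⁻ (L (𝓕 h))`. Using the first form for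
`H (𝓕 φ)` and the second for `H φ`, the multiplication formulas `∫ 𝓕 u · v = ∫ u · 𝓕 v` and
`∫ 𝓕⁻ u · v = ∫ u · 𝓕⁻ v` together with Fourier inversion turn both sides into
`∫ L (𝓕 φ) · ψ + ∫ L φ · 𝓕 ψ`. All integrals converge because `log|t|` is integrable near `0`
and `|t| · h t` is integrable for Schwartz `h`.
-/

open MeasureTheory Complex

/-- The Fourier transform on `ℝ`: `𝓕f(ξ) = ∫ f(x)·e^{−2πixξ} dx`. -/
noncomputable def fourierT (f : ℝ → ℂ) (ξ : ℝ) : ℂ :=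
  ∫ x : ℝ, f x * Complex.exp (-(2 * Real.pi * Complex.I * x * ξ))

/-- The inverse Fourier transform on `ℝ`: `𝓕⁻¹f(x) = ∫ f(ξ)·e^{2πixξ} dξ`. -/
noncomputable def fourierInv (f : ℝ → ℂ) (x : ℝ) : ℂ :=
  ∫ ξ : ℝ, f ξ * Complex.exp (2 * Real.pi * Complex.I * x * ξ)

/-- The conductor operator
`H(φ)(t) = log|t|·φ(t) + ∫ log|ξ|·(𝓕⁻¹φ)(ξ)·e^{−2πitξ} dξ`. -/
noncomputable def condOp (φ : ℝ → ℂ) (t : ℝ) : ℂ :=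
  (Real.log |t| : ℂ) * φ t +
    ∫ ξ : ℝ, (Real.log |ξ| : ℂ) * fourierInv φ ξ *
      Complex.exp (-(2 * Real.pi * Complex.I * t * ξ))

open scoped FourierTransform SchwartzMap

section FourierIntegral

variable {V : Type*} [NormedAddCommGroup V] [InnerProductSpace ℝ V] [FiniteDimensional ℝ V]
  [MeasurableSpace V] [BorelSpace V]

theorem MeasureTheory.Integrable.integral_fourier_mul_eq {f g : V → ℂ} (hf : Integrable f)
    (hg : Integrable g) : ∫ ξ, 𝓕 f ξ * g ξ = ∫ x, f x * 𝓕 g x := by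
  simpa using! VectorFourier.integral_bilin_fourierIntegral_eq_flip (.mul ℂ ℂ) (L := innerₗ V)
    Real.continuous_fourierChar continuous_inner hf hg

theorem MeasureTheory.Integrable.integral_fourierInv_mul_eq {f g : V → ℂ} (hf : Integrable f)
    (hg : Integrable g) : ∫ ξ, 𝓕⁻ f ξ * g ξ = ∫ x, f x * 𝓕⁻ g x := by
  have hflip : (-innerₗ V).flip = -innerₗ V := by
    ext x y
    simp [real_inner_comm]
  simpa [hflip] using! VectorFourier.integral_bilin_fourierIntegral_eq_flip (.mul ℂ ℂ)
    (L := -innerₗ V) Real.continuous_fourierChar continuous_inner.neg hf hg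

theorem MeasureTheory.Integrable.memLp_top_fourier {f : V → ℂ} (hf : Integrable f) :
    MemLp (𝓕 f) ⊤ :=
  memLp_top_of_bound
    (VectorFourier.fourierIntegral_continuous Real.continuous_fourierChar continuous_inner
      hf).aestronglyMeasurable
    _ (ae_of_all _ fun ξ => VectorFourier.norm_fourierIntegral_le_integral_norm _ _ _ _ ξ)

end FourierIntegral

theorem fourierT_eq_fourier (f : ℝ → ℂ) : fourierT f = 𝓕 f := by
  ext ξ
  rw [Real.fourier_real_eq_integral_exp_smul, fourierT]
  congr 1 with x
  rw [smul_eq_mul, mul_comm]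
  push_cast
  ring_nf

theorem fourierInv_eq_fourierInv (f : ℝ → ℂ) : fourierInv f = 𝓕⁻ f := by
  ext x
  rw [Real.fourierInv_eq_fourier_neg, Real.fourier_real_eq_integral_exp_smul, fourierInv]
  congr 1 with ξ
  rw [smul_eq_mul, mul_comm]
  push_cast
  ring_nf

theorem condOp_eq_fourier (f : ℝ → ℂ) :
    condOp f = fun t => (Real.log |t| : ℂ) * f t +
      𝓕 (fun ξ => (Real.log |ξ| : ℂ) * 𝓕⁻ f ξ) t := by
  ext t
  rw [condOp, ← fourierInv_eq_fourierInv, ← fourierT_eq_fourier, fourierT]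
  congr 2 with ξ
  ring_nf

theorem condOp_eq_fourierInv (f : ℝ → ℂ) :
    condOp f = fun t => (Real.log |t| : ℂ) * f t +
      𝓕⁻ (fun ξ => (Real.log |ξ| : ℂ) * 𝓕 f ξ) t := by
  simp_rw [condOp_eq_fourier, Real.fourierInv_eq_fourier_comp_neg
    (fun ξ => (Real.log |ξ| : ℂ) * 𝓕 f ξ), abs_neg, ← Real.fourierInv_eq_fourier_neg]

theorem integrable_log_abs_mul {h : ℝ → ℂ} (hb : MemLp h ⊤)
    (hdecay : Integrable fun t => ‖t‖ * ‖h t‖) :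
    Integrable fun t => (Real.log |t| : ℂ) * h t := by
  rw [← integrableOn_univ, ← Set.union_compl_self (Set.Ioc (-1 : ℝ) 1)]
  refine IntegrableOn.union ?_ ?_
  · have hlog : IntegrableOn (fun t : ℝ => (Real.log |t| : ℂ)) (Set.Ioc (-1) 1) := by
      simp only [Real.log_abs]
      exact (intervalIntegral.intervalIntegrable_log' (a := -1) (b := 1)).1.ofReal
    exact hlog.mul_of_top_left (hb.restrict _)
  · have hmeas : AEStronglyMeasurable (fun t : ℝ => (Real.log |t| : ℂ) * h t) :=
      (by fun_prop : Measurable fun t : ℝ => (Real.log |t| : ℂ)).aestronglyMeasurable.mul hb.1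
    refine hdecay.integrableOn.mono' hmeas.restrict ?_
    filter_upwards [ae_restrict_mem measurableSet_Ioc.compl] with t ht
    have h1 : 1 ≤ |t| := by
      simp only [Set.mem_compl_iff, Set.mem_Ioc, not_and_or, not_lt, not_le] at ht
      rcases ht with ht | ht <;> cases abs_cases t <;> linarith
    rw [norm_mul, Complex.norm_real, Real.norm_eq_abs, Real.norm_eq_abs,
      abs_of_nonneg (Real.log_nonneg h1)]
    exact mul_le_mul_of_nonneg_right (Real.log_le_self (abs_nonneg t)) (norm_nonneg _)

namespace SchwartzMap

variable (f g : 𝓢(ℝ, ℂ))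

theorem integrable_log_abs_mul : Integrable fun t => (Real.log |t| : ℂ) * f t :=
  _root_.integrable_log_abs_mul f.memLp_top (by simpa using f.integrable_pow_mul volume 1)

theorem integrable_log_abs_mul_mul : Integrable fun t => (Real.log |t| : ℂ) * f t * g t :=
  f.integrable_log_abs_mul.mul_of_top_left g.memLp_top

theorem integrable_fourier_mul {k : ℝ → ℂ} (hk : Integrable k) :
    Integrable fun t => 𝓕 k t * g t :=
  g.integrable.mul_of_top_right hk.memLp_top_fourier

theorem integrable_fourierInv_mul {k : ℝ → ℂ} (hk : Integrable k) :
    Integrable fun t => 𝓕⁻ k t * g t := by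
  rw [Real.fourierInv_eq_fourier_comp_neg]
  exact g.integrable_fourier_mul hk.comp_neg

theorem fourierInv_fourier_coe : 𝓕⁻ (𝓕 (f : ℝ → ℂ)) = f :=
  f.continuous.fourierInv_fourier_eq f.integrable (𝓕 f).integrable

theorem condOp_fourier_mul_eq :
    (fun t => condOp (𝓕 (f : ℝ → ℂ)) t * g t) = fun t =>
      (Real.log |t| : ℂ) * 𝓕 (f : ℝ → ℂ) t * g t +
        𝓕 (fun ξ => (Real.log |ξ| : ℂ) * f ξ) t * g t := by
  ext t
  rw [condOp_eq_fourier, f.fourierInv_fourier_coe]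
  ring

theorem condOp_mul_fourier_eq :
    (fun t => condOp f t * 𝓕 (g : ℝ → ℂ) t) = fun t =>
      (Real.log |t| : ℂ) * f t * 𝓕 (g : ℝ → ℂ) t +
        𝓕⁻ (fun ξ => (Real.log |ξ| : ℂ) * 𝓕 (f : ℝ → ℂ) ξ) t * 𝓕 (g : ℝ → ℂ) t := by
  ext t
  rw [condOp_eq_fourierInv]
  ring

theorem integrable_condOp_fourier_mul :
    Integrable fun t => condOp (𝓕 (f : ℝ → ℂ)) t * g t := by
  rw [condOp_fourier_mul_eq]
  exact ((𝓕 f).integrable_log_abs_mul_mul g).add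
    (g.integrable_fourier_mul f.integrable_log_abs_mul)

theorem integrable_condOp_mul_fourier :
    Integrable fun t => condOp f t * 𝓕 (g : ℝ → ℂ) t := by
  rw [condOp_mul_fourier_eq]
  exact (f.integrable_log_abs_mul_mul (𝓕 g)).add
    ((𝓕 g).integrable_fourierInv_mul (𝓕 f).integrable_log_abs_mul)

theorem integral_condOp_fourier_mul :
    ∫ t, condOp (𝓕 (f : ℝ → ℂ)) t * g t =
      (∫ t, (Real.log |t| : ℂ) * 𝓕 (f : ℝ → ℂ) t * g t) +
        ∫ t, (Real.log |t| : ℂ) * f t * 𝓕 (g : ℝ → ℂ) t := by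
  rw [condOp_fourier_mul_eq, integral_add ((𝓕 f).integrable_log_abs_mul_mul g)
    (g.integrable_fourier_mul f.integrable_log_abs_mul),
    f.integrable_log_abs_mul.integral_fourier_mul_eq g.integrable]

theorem integral_condOp_mul_fourier :
    ∫ t, condOp f t * 𝓕 (g : ℝ → ℂ) t =
      (∫ t, (Real.log |t| : ℂ) * f t * 𝓕 (g : ℝ → ℂ) t) +
        ∫ t, (Real.log |t| : ℂ) * 𝓕 (f : ℝ → ℂ) t * g t := by
  rw [condOp_mul_fourier_eq]
  simp only [← fourier_coe]
  rw [integral_add (f.integrable_log_abs_mul_mul (𝓕 g))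
    ((𝓕 g).integrable_fourierInv_mul (𝓕 f).integrable_log_abs_mul),
    (𝓕 f : 𝓢(ℝ, ℂ)).integrable_log_abs_mul.integral_fourierInv_mul_eq (𝓕 g).integrable]
  simp only [fourier_coe, g.fourierInv_fourier_coe]

end SchwartzMap

/-- The conductor operator commutes with the Fourier transform:
for Schwartz `φ, ψ`, `∫ H(𝓕φ)(t)·ψ(t) dt = ∫ H(φ)(t)·(𝓕ψ)(t) dt`,
both integrals converging absolutely. -/
theorem conductor_commutes_with_fourier (φ ψ : SchwartzMap ℝ ℂ) :
    Integrable (fun t : ℝ => condOp (fourierT fun s => φ s) t * ψ t) ∧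
    Integrable (fun t : ℝ => condOp (fun s => φ s) t * fourierT (fun s => ψ s) t) ∧
    (∫ t : ℝ, condOp (fourierT fun s => φ s) t * ψ t) =
      ∫ t : ℝ, condOp (fun s => φ s) t * fourierT (fun s => ψ s) t := by
  simp only [fourierT_eq_fourier]
  refine ⟨φ.integrable_condOp_fourier_mul ψ, φ.integrable_condOp_mul_fourier ψ, ?_⟩
  rw [φ.integral_condOp_fourier_mul, φ.integral_condOp_mul_fourier, add_comm]
end

section
/- Let x > 1 be a real number and let g : ℝ → ℂ be smooth with compact support contained in (0,∞). Then the family j ↦ ĝ( j·(2πi/log x) ) (j ∈ ℤ) is summable, and log(x)·∑_{k ∈ ℤ} g(x^k) = ∑_{j ∈ ℤ} ĝ( j·(2πi/log x) ), where the left-hand sum has only finitely many nonzero terms. (A form of the Poisson summation formula, derived from the functional equation Λ_x(s) + Λ_x(−s) = −log x.) -/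
open MeasureTheory Complex

/-- Mellin transform: `ĝ(s) = ∫_0^∞ g(u)·u^s du/u`. -/
noncomputable def mellinT (g : ℝ → ℂ) (s : ℂ) : ℂ :=
  ∫ u in Set.Ioi (0 : ℝ), g u * (u : ℂ) ^ s / (u : ℂ)

open FourierTransform Real

noncomputable def toSchwartzAux (f : ℝ → ℂ) (hf : ContDiff ℝ (⊤ : ℕ∞) f) (hc : HasCompactSupport f) :
    SchwartzMap ℝ ℂ where
  toFun := f
  smooth' := hf.of_le (by simp)
  decay' := by
    intro k n
    have hD : HasCompactSupport (iteratedFDeriv ℝ n f) := hc.iteratedFDeriv n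
    have hcont : Continuous fun x : ℝ => ‖x‖ ^ k * ‖iteratedFDeriv ℝ n f x‖ :=
      ((continuous_norm.pow k)).mul (hf.continuous_iteratedFDeriv (by exact_mod_cast le_top)).norm
    have hsupp : HasCompactSupport fun x : ℝ => ‖x‖ ^ k * ‖iteratedFDeriv ℝ n f x‖ :=
      (hD.norm).mul_left
    obtain ⟨C, hC⟩ := hcont.bounded_above_of_compact_support hsupp
    exact ⟨C, fun x => (Real.le_norm_self _).trans (hC x)⟩

lemma mellinT_eq_mellin (g : ℝ → ℂ) (s : ℂ) : mellinT g s = mellin g s := by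
  refine setIntegral_congr_fun measurableSet_Ioi fun u hu => ?_
  have hu0 : (u : ℂ) ≠ 0 := ofReal_ne_zero.2 (ne_of_gt hu)
  rw [smul_eq_mul, cpow_sub _ _ hu0, cpow_one]
  ring

lemma mellinT_key (x : ℝ) (hx : 1 < x) (g : ℝ → ℂ) (j : ℤ) :
    mellinT g ((j : ℂ) * (2 * (Real.pi : ℂ) * Complex.I / (Real.log x : ℂ))) =
      (Real.log x : ℂ) * 𝓕 (fun t => g (Real.exp (Real.log x * t))) (-(j : ℝ)) := by
  set L := Real.log x with hLdef
  have hL : 0 < L := Real.log_pos hx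
  have hLne : L ≠ 0 := ne_of_gt hL
  set f : ℝ → ℂ := fun t => g (Real.exp (L * t)) with hfdef
  set h : ℝ → ℂ := fun u => g (Real.exp (-u)) with hhdef
  set s : ℂ := (j : ℂ) * (2 * (Real.pi : ℂ) * Complex.I / (L : ℂ)) with hsdef
  have hs : s = ((2 * Real.pi * j / L : ℝ) : ℂ) * Complex.I := by
    rw [hsdef]; push_cast; ring
  have hre : s.re = 0 := by rw [hs]; simp
  have him : s.im = 2 * Real.pi * j / L := by rw [hs]; simp
  have step1 : mellinT g s = 𝓕 h ((j : ℝ) / L) := by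
    rw [mellinT_eq_mellin, mellin_eq_fourier]
    rw [hre, him]
    refine congrArg₂ (fun (a : ℝ → ℂ) (b : ℝ) => 𝓕 a b) ?_ ?_
    · funext u; simp [hhdef]
    · field_simp
  set F : ℝ → ℂ := fun u => Complex.exp (((-2 * Real.pi * (u * ((j : ℝ) / L)) : ℝ) : ℂ) * Complex.I) • h u with hFdef
  have claim1 : 𝓕 h ((j : ℝ) / L) = ∫ u, F u := by
    rw [Real.fourier_real_eq_integral_exp_smul]; simp_rw [mul_assoc (-2 * π)]
    congr 1
  have claim2 : 𝓕 f (-(j : ℝ)) = ∫ t, F ((-L) * t) := by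
    rw [Real.fourier_real_eq_integral_exp_smul]; simp_rw [mul_assoc (-2 * π)]
    congr 1
    funext t
    have h1 : h ((-L) * t) = f t := by
      simp [hhdef, hfdef, neg_mul, neg_neg]
    have h2 : (-L * t) * ((j : ℝ) / L) = t * (-(j : ℝ)) := by
      field_simp
    simp only [hFdef, h1, h2]
  have claim3 : ∫ t, F ((-L) * t) = |(-L)⁻¹| • ∫ u, F u :=
    MeasureTheory.Measure.integral_comp_mul_left F (-L)
  have habs : |(-L)⁻¹| = L⁻¹ := by
    rw [abs_inv, abs_neg, abs_of_pos hL]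
  have : 𝓕 f (-(j : ℝ)) = L⁻¹ • 𝓕 h ((j : ℝ) / L) := by
    rw [claim2, claim3, habs, claim1]
  rw [step1, this, Complex.real_smul]
  push_cast
  rw [← mul_assoc, mul_inv_cancel₀ (by exact_mod_cast hLne), one_mul]

set_option maxHeartbeats 1000000 in
/-- A form of the Poisson summation formula: for real `x > 1` and smooth `g` compactly
supported in `(0,∞)`, the family `j ↦ ĝ(j·2πi/log x)` is summable,
`k ↦ g(x^k)` has only finitely many nonzero terms, and
`log(x)·∑_{k ∈ ℤ} g(x^k) = ∑_{j ∈ ℤ} ĝ(j·2πi/log x)`. -/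
theorem poisson_summation_from_functional_equation (x : ℝ) (hx : 1 < x)
    (g : ℝ → ℂ) (hg : ContDiff ℝ (⊤ : ℕ∞) g) (hc : HasCompactSupport g)
    (hsupp : tsupport g ⊆ Set.Ioi 0) :
    Summable (fun j : ℤ => mellinT g ((j : ℂ) * (2 * (Real.pi : ℂ) * Complex.I / (Real.log x : ℂ)))) ∧
    {k : ℤ | g (x ^ k) ≠ 0}.Finite ∧
    (Real.log x : ℂ) * (∑' k : ℤ, g (x ^ k)) =
      ∑' j : ℤ, mellinT g ((j : ℂ) * (2 * (Real.pi : ℂ) * Complex.I / (Real.log x : ℂ))) := by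
  have hx0 : 0 < x := lt_trans one_pos hx
  set L := Real.log x with hLdef
  have hL : 0 < L := Real.log_pos hx
  have hLne : L ≠ 0 := ne_of_gt hL
  set f : ℝ → ℂ := fun t => g (Real.exp (L * t)) with hfdef
  -- smoothness
  have hfsm : ContDiff ℝ (⊤ : ℕ∞) f :=
    hg.comp (Real.contDiff_exp.comp (contDiff_const.mul contDiff_id))
  -- compact support
  have hfc : HasCompactSupport f := by
    have hK : IsCompact ((fun u => Real.log u / L) '' tsupport g) := by
      apply hc.image_of_continuousOn
      exact (Real.continuousOn_log.mono (by
        intro u hu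
        simp only [Set.mem_compl_iff, Set.mem_singleton_iff]
        exact ne_of_gt (hsupp hu))).div_const _
    refine HasCompactSupport.intro hK fun t ht => ?_
    by_contra hft
    apply ht
    have h1 : Real.exp (L * t) ∈ tsupport g :=
      subset_tsupport g (by simpa [hfdef] using hft)
    refine ⟨Real.exp (L * t), h1, ?_⟩
    show Real.log (Real.exp (L * t)) / L = t
    rw [Real.log_exp]
    field_simp
  set F := toSchwartzAux f hfsm hfc with hFdef
  have hFcoe : ⇑F = f := rfl
  have hFT : ⇑(SchwartzMap.fourierTransformCLM ℝ F) = 𝓕 f := by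
    rw [SchwartzMap.fourierTransformCLM_apply, SchwartzMap.fourier_coe, hFcoe]
  -- summability of Fourier side
  have hsumF : Summable fun n : ℤ => 𝓕 f n := by
    rw [← hFT]
    exact summable_of_isBigO (Real.summable_abs_int_rpow one_lt_two)
      (((SchwartzMap.fourierTransformCLM ℝ F).isBigO_cocompact_rpow (-2)).comp_tendsto
        Int.tendsto_coe_cofinite)
  have key : ∀ j : ℤ, mellinT g ((j : ℂ) * (2 * (Real.pi : ℂ) * Complex.I / (L : ℂ)))
      = (L : ℂ) * 𝓕 f (-(j : ℝ)) := fun j => mellinT_key x hx g j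
  -- summability of mellin side
  have hsumM : Summable (fun j : ℤ =>
      mellinT g ((j : ℂ) * (2 * (Real.pi : ℂ) * Complex.I / (L : ℂ)))) := by
    have h1 : Summable fun j : ℤ => 𝓕 f (((-j : ℤ) : ℝ)) :=
      hsumF.comp_injective neg_injective
    have h2 : Summable fun j : ℤ => (L : ℂ) * 𝓕 f (-(j : ℝ)) := by
      refine (h1.mul_left ((L : ℂ))).congr fun j => ?_
      rw [Int.cast_neg]
    exact h2.congr fun j => (key j).symm
  -- values at integers
  have hgk : ∀ k : ℤ, g (x ^ k) = f k := by
    intro k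
    rw [hfdef]
    congr 1
    rw [← Real.rpow_intCast x k, Real.rpow_def_of_pos hx0]
  -- finiteness
  have hfin : {k : ℤ | g (x ^ k) ≠ 0}.Finite := by
    have h1 : ((tsupport f)ᶜ) ∈ Filter.cocompact ℝ :=
      Filter.mem_cocompact.mpr ⟨tsupport f, hfc, subset_rfl⟩
    have h2 : ((Int.cast : ℤ → ℝ) ⁻¹' (tsupport f)ᶜ) ∈ Filter.cofinite :=
      Int.tendsto_coe_cofinite h1
    rw [Filter.mem_cofinite] at h2
    refine h2.subset fun k hk => ?_
    simp only [Set.mem_compl_iff, Set.mem_preimage, Set.mem_compl_iff, not_not]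
    exact subset_tsupport f (by rw [Function.mem_support, ← hgk k]; exact hk)
  refine ⟨hsumM, hfin, ?_⟩
  -- Poisson
  have hpoisson : ∑' k : ℤ, f k = ∑' n : ℤ, 𝓕 f n := by
    have := SchwartzMap.tsum_eq_tsum_fourier F 0
    simp only [zero_add, QuotientAddGroup.mk_zero, fourier_eval_zero, mul_one, hFcoe] at this
    rw [this]
    exact tsum_congr fun n => congrFun hFT n
  calc (L : ℂ) * ∑' k : ℤ, g (x ^ k)
      = (L : ℂ) * ∑' k : ℤ, f k := by rw [tsum_congr hgk]
    _ = ∑' n : ℤ, (L : ℂ) * 𝓕 f n := by rw [hpoisson, tsum_mul_left]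
    _ = ∑' n : ℤ, mellinT g (((-n : ℤ) : ℂ) * (2 * (Real.pi : ℂ) * Complex.I / (L : ℂ))) := by
        refine tsum_congr fun n => ?_
        rw [key (-n)]
        push_cast
        ring_nf
    _ = ∑' j : ℤ, mellinT g ((j : ℂ) * (2 * (Real.pi : ℂ) * Complex.I / (L : ℂ))) := by
        exact (Equiv.neg ℤ).tsum_eq fun j =>
          mellinT g ((j : ℂ) * (2 * (Real.pi : ℂ) * Complex.I / (L : ℂ)))
end

section
/- Let x > 1 be a real number and let g : ℝ → ℂ be smooth with compact support contained in (0,∞). Set Λ_x(s) = log(x)·x^{−s}/(1 − x^{−s}). Then the function τ ↦ ĝ(1 + iτ)·Λ_x(1 + iτ) is integrable on ℝ and (1/2π)·∫_ℝ ĝ(1 + iτ)·Λ_x(1 + iτ) dτ = log(x)·∑_{k ≥ 1} g(x^k), where the sum on the right has only finitely many nonzero terms. -/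
open MeasureTheory Complex

/-- `Λ_x(s) = log(x)·x^{−s}/(1 − x^{−s})`. -/
noncomputable def LambdaX (x : ℝ) (s : ℂ) : ℂ :=
  (Real.log x : ℂ) * (x : ℂ) ^ (-s) / (1 - (x : ℂ) ^ (-s))

open scoped FourierTransform

/-- Fourier transform of a smooth compactly supported function is integrable. -/
lemma integrable_fourier_of_compactSupport (f : ℝ → ℂ) (hf : ContDiff ℝ (⊤ : ℕ∞) f)
    (hc : HasCompactSupport f) : Integrable (𝓕 f) := by
  let φ : SchwartzMap ℝ ℂ :=
    { toFun := f
      smooth' := hf.of_le (by simp)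
      decay' := by
        intro k n
        have h1 : Continuous fun x : ℝ => ‖x‖ ^ k * ‖iteratedFDeriv ℝ n f x‖ :=
          (continuous_norm.pow k).mul (hf.continuous_iteratedFDeriv (by exact_mod_cast le_top)).norm
        have h2 : HasCompactSupport fun x : ℝ => ‖x‖ ^ k * ‖iteratedFDeriv ℝ n f x‖ :=
          ((hc.iteratedFDeriv n).norm).mul_left
        obtain ⟨C, hC⟩ := h2.exists_bound_of_continuous h1
        refine ⟨C, fun x => ?_⟩
        have h := hC x
        rw [Real.norm_eq_abs, _root_.abs_of_nonneg (by positivity)] at h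
        exact h }
  have h : 𝓕 f = (SchwartzMap.fourierTransformCLM ℂ φ : ℝ → ℂ) := by
    funext v
    simp only [SchwartzMap.fourierTransformCLM_apply]
    rfl
  rw [h]
  exact (SchwartzMap.fourierTransformCLM ℂ φ).integrable

/-- For real `x > 1` and smooth `g` compactly supported in `(0,∞)`,
`τ ↦ ĝ(1+iτ)·Λ_x(1+iτ)` is integrable on `ℝ` and
`(1/2π)·∫_ℝ ĝ(1+iτ)·Λ_x(1+iτ) dτ = log(x)·∑_{k ≥ 1} g(x^k)`,
the sum on the right having only finitely many nonzero terms. -/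
theorem lambda_integral_line_one (x : ℝ) (hx : 1 < x)
    (g : ℝ → ℂ) (hg : ContDiff ℝ (⊤ : ℕ∞) g) (hc : HasCompactSupport g)
    (hsupp : tsupport g ⊆ Set.Ioi 0) :
    Integrable (fun τ : ℝ =>
      mellinT g (1 + (τ : ℂ) * Complex.I) * LambdaX x (1 + (τ : ℂ) * Complex.I)) ∧
    {k : ℕ | g (x ^ (k + 1)) ≠ 0}.Finite ∧
    (1 / (2 * (Real.pi : ℂ))) * (∫ τ : ℝ,
        mellinT g (1 + (τ : ℂ) * Complex.I) * LambdaX x (1 + (τ : ℂ) * Complex.I)) =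
      (Real.log x : ℂ) * ∑' k : ℕ, g (x ^ (k + 1)) := by
  have hx0 : (0 : ℝ) < x := lt_trans one_pos hx
  have hxC : (x : ℂ) ≠ 0 := ofReal_ne_zero.mpr hx0.ne'
  -- mellinT coincides with mathlib's mellin
  have hmt : ∀ s : ℂ, mellinT g s = mellin g s := by
    intro s
    refine setIntegral_congr_fun measurableSet_Ioi fun t ht => ?_
    have ht0 : (t : ℂ) ≠ 0 := ofReal_ne_zero.mpr (ne_of_gt ht)
    rw [smul_eq_mul, cpow_sub _ _ ht0, cpow_one]
    ring
  -- the auxiliary function for the Fourier picture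
  set G : ℝ → ℂ := fun u => Real.exp (-u) • g (Real.exp (-u)) with hGdef
  have hGsmooth : ContDiff ℝ (⊤ : ℕ∞) G :=
    (Real.contDiff_exp.comp contDiff_neg).smul (hg.comp (Real.contDiff_exp.comp contDiff_neg))
  have hGsupp : HasCompactSupport G := by
    have hK : IsCompact ((fun t => -Real.log t) '' tsupport g) :=
      hc.image_of_continuousOn ((Real.continuousOn_log.mono
        (fun t ht => ne_of_gt (hsupp ht))).neg)
    refine HasCompactSupport.intro hK fun u hu => ?_
    have : g (Real.exp (-u)) = 0 := by
      by_contra h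
      exact hu ⟨Real.exp (-u), subset_tsupport g h, by simp [Real.log_exp]⟩
    simp [hGdef, this]
  have hFG : Integrable (𝓕 G) := integrable_fourier_of_compactSupport G hGsmooth hGsupp
  -- Mellin of g on the vertical line as a Fourier transform
  have hkey : ∀ τ : ℝ, mellin g (1 + (τ : ℂ) * Complex.I) = 𝓕 G (τ / (2 * Real.pi)) := by
    intro τ
    have h := mellin_eq_fourier g (s := 1 + (τ : ℂ) * Complex.I)
    simpa [hGdef, neg_one_mul] using h
  have hφ : Integrable (fun τ : ℝ => mellin g (1 + (τ : ℂ) * Complex.I)) := by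
    have h2π : (2 * Real.pi) ≠ 0 := by positivity
    have := hFG.comp_div h2π
    exact this.congr (Filter.Eventually.of_forall fun τ => (hkey τ).symm)
  -- basic facts about w τ = x^{-(1+iτ)}
  set w : ℝ → ℂ := fun τ => (x : ℂ) ^ (-(1 + (τ : ℂ) * Complex.I)) with hwdef
  have hwnorm : ∀ τ : ℝ, ‖w τ‖ = x⁻¹ := by
    intro τ
    rw [hwdef]
    rw [Complex.norm_cpow_eq_rpow_re_of_pos hx0]
    rw [show (-(1 + (τ : ℂ) * Complex.I)).re = -1 by simp, Real.rpow_neg_one]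
  have hxinv1 : x⁻¹ < 1 := inv_lt_one_of_one_lt₀ hx
  have hxinv0 : (0 : ℝ) ≤ x⁻¹ := by positivity
  have hw1 : ∀ τ : ℝ, 1 - w τ ≠ 0 := by
    intro τ h
    have h1 : (1 : ℂ) = w τ := sub_eq_zero.mp h
    have h2 := hwnorm τ
    rw [← h1, norm_one] at h2
    linarith
  have hdenom : ∀ τ : ℝ, 1 - x⁻¹ ≤ ‖1 - w τ‖ := by
    intro τ
    have := norm_sub_norm_le (1 : ℂ) (w τ)
    simpa [hwnorm τ] using this
  have hdenom0 : (0 : ℝ) < 1 - x⁻¹ := by linarith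
  have hlog0 : (0 : ℝ) ≤ Real.log x := Real.log_nonneg hx.le
  have hwcont : Continuous w := by
    apply Continuous.const_cpow (by fun_prop) (Or.inl hxC)
  -- norm bound for LambdaX on the line
  have hΛ : ∀ τ : ℝ, ‖LambdaX x (1 + (τ : ℂ) * Complex.I)‖ ≤ Real.log x * x⁻¹ / (1 - x⁻¹) := by
    intro τ
    unfold LambdaX
    rw [norm_div, norm_mul]
    have h1 : ‖(Real.log x : ℂ)‖ = Real.log x := by
      rw [Complex.norm_real, Real.norm_eq_abs, _root_.abs_of_nonneg hlog0]
    rw [h1, hwnorm τ]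
    gcongr
    exact hdenom τ
  have hΛcont : Continuous fun τ : ℝ => LambdaX x (1 + (τ : ℂ) * Complex.I) := by
    unfold LambdaX
    exact (continuous_const.mul hwcont).div (continuous_const.sub hwcont) hw1
  -- Part 1 : integrability
  have hint : Integrable (fun τ : ℝ =>
      mellinT g (1 + (τ : ℂ) * Complex.I) * LambdaX x (1 + (τ : ℂ) * Complex.I)) := by
    simp only [hmt]
    have := (hφ.bdd_mul hΛcont.aestronglyMeasurable
      (c := Real.log x * x⁻¹ / (1 - x⁻¹)) (Filter.Eventually.of_forall hΛ))
    exact this.congr (Filter.Eventually.of_forall fun τ => mul_comm _ _)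
  -- Part 2 : finiteness
  have hfin : {k : ℕ | g (x ^ (k + 1)) ≠ 0}.Finite := by
    obtain ⟨R, hR⟩ := hc.isCompact.bddAbove
    have htend : Filter.Tendsto (fun k : ℕ => x ^ (k + 1)) Filter.atTop Filter.atTop :=
      (tendsto_pow_atTop_atTop_of_one_lt hx).comp (Filter.tendsto_add_atTop_nat 1)
    have hev : ∀ᶠ k : ℕ in Filter.cofinite, ¬ g (x ^ (k + 1)) ≠ 0 := by
      rw [Nat.cofinite_eq_atTop]
      filter_upwards [htend.eventually_gt_atTop R] with k hk
      intro h
      exact absurd (hR (subset_tsupport g h)) (not_le.mpr hk)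
    simpa using Filter.eventually_cofinite.mp hev
  -- geometric series expansion of LambdaX pointwise
  have hgeo : ∀ τ : ℝ, LambdaX x (1 + (τ : ℂ) * Complex.I)
      = (Real.log x : ℂ) * ∑' k : ℕ, w τ ^ (k + 1) := by
    intro τ
    have h0 : ∑' k : ℕ, w τ ^ k = (1 - w τ)⁻¹ :=
      tsum_geometric_of_norm_lt_one (by rw [hwnorm]; exact hxinv1)
    have h1 : ∑' k : ℕ, w τ ^ (k + 1) = w τ * (1 - w τ)⁻¹ := by
      rw [← h0, ← tsum_mul_left]
      exact tsum_congr fun k => by ring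
    rw [h1]
    unfold LambdaX
    have hw : (x : ℂ) ^ (-(1 + (τ : ℂ) * Complex.I)) = w τ := rfl
    rw [hw, div_eq_mul_inv, mul_assoc]
  -- the summands
  set F : ℕ → ℝ → ℂ := fun k τ =>
    (Real.log x : ℂ) * (mellin g (1 + (τ : ℂ) * Complex.I) * w τ ^ (k + 1)) with hFdef
  have hFnorm : ∀ k τ, ‖F k τ‖
      = Real.log x * (‖mellin g (1 + (τ : ℂ) * Complex.I)‖ * x⁻¹ ^ (k + 1)) := by
    intro k τ
    rw [hFdef]
    simp only [norm_mul, norm_pow, hwnorm, Complex.norm_real, Real.norm_eq_abs,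
      _root_.abs_of_nonneg hlog0]
  have hwpowcont : ∀ k : ℕ, Continuous fun τ => w τ ^ (k + 1) := fun k => hwcont.pow _
  have hF_int : ∀ k : ℕ, Integrable (F k) := by
    intro k
    apply Integrable.const_mul
    have := hφ.bdd_mul (hwpowcont k).aestronglyMeasurable
      (c := x⁻¹ ^ (k + 1)) (Filter.Eventually.of_forall fun τ => by rw [norm_pow, hwnorm])
    exact this.congr (Filter.Eventually.of_forall fun τ => mul_comm _ _)
  have hF_sum : Summable fun k : ℕ => ∫ τ : ℝ, ‖F k τ‖ := by
    have : (fun k : ℕ => ∫ τ : ℝ, ‖F k τ‖)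
        = fun k : ℕ => Real.log x * ((∫ τ : ℝ, ‖mellin g (1 + (τ : ℂ) * Complex.I)‖)
          * x⁻¹ ^ (k + 1)) := by
      funext k
      simp only [hFnorm]
      rw [integral_const_mul, integral_mul_const]
    rw [this]
    apply Summable.mul_left
    apply Summable.mul_left
    have : Summable fun k : ℕ => x⁻¹ ^ k := summable_geometric_of_lt_one hxinv0 hxinv1
    exact (summable_nat_add_iff 1).mpr this
  -- swap sum and integral
  have hswap : (∫ τ : ℝ, mellinT g (1 + (τ : ℂ) * Complex.I)
        * LambdaX x (1 + (τ : ℂ) * Complex.I))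
      = ∑' k : ℕ, ∫ τ : ℝ, F k τ := by
    rw [integral_tsum_of_summable_integral_norm hF_int hF_sum]
    apply integral_congr_ae
    filter_upwards with τ
    rw [hmt, hgeo τ, hFdef]
    rw [← tsum_mul_left, ← tsum_mul_left]
    exact tsum_congr fun k => by ring
  -- identify each integral via Mellin inversion
  have hpow : ∀ (τ : ℝ) (k : ℕ), w τ ^ (k + 1)
      = ((x ^ (k + 1) : ℝ) : ℂ) ^ (-(1 + (τ : ℂ) * Complex.I)) := by
    intro τ k
    have hp : (0 : ℝ) < x ^ (k + 1) := pow_pos hx0 _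
    rw [hwdef, ← cpow_nat_mul]
    rw [cpow_def_of_ne_zero hxC, cpow_def_of_ne_zero (ofReal_ne_zero.mpr hp.ne')]
    congr 1
    rw [← Complex.ofReal_log hx0.le, ← Complex.ofReal_log hp.le, Real.log_pow]
    push_cast
    ring
  have hinv : ∀ k : ℕ, (∫ τ : ℝ, mellin g (1 + (τ : ℂ) * Complex.I)
        * ((x ^ (k + 1) : ℝ) : ℂ) ^ (-(1 + (τ : ℂ) * Complex.I)))
      = (2 * Real.pi : ℂ) * g (x ^ (k + 1)) := by
    intro k
    have hp : (0 : ℝ) < x ^ (k + 1) := pow_pos hx0 _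
    have hmc : MellinConvergent g 1 := by
      have h1 : IntegrableOn g (Set.Ioi 0) :=
        (hg.continuous.integrable_of_hasCompactSupport hc).integrableOn
      exact (integrableOn_congr_fun (fun t ht => by simp) measurableSet_Ioi).mpr h1
    have hvert : Complex.VerticalIntegrable (mellin g) 1 := by
      have := hφ
      simpa [Complex.VerticalIntegrable] using this
    have hminv := mellinInv_mellin_eq 1 g hp hmc hvert hg.continuous.continuousAt
    rw [mellinInv] at hminv
    have h2π : ((2 * Real.pi : ℝ) : ℂ) ≠ 0 := by
      simp [Real.pi_ne_zero]
    have : (∫ y : ℝ, ((x ^ (k + 1) : ℝ) : ℂ) ^ (-((1 : ℝ) + (y : ℂ) * Complex.I))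
        • mellin g ((1 : ℝ) + (y : ℂ) * Complex.I)) = (2 * Real.pi : ℂ) * g (x ^ (k + 1)) := by
      rw [← hminv, Complex.real_smul]
      have hco : ((1 / (2 * Real.pi) : ℝ) : ℂ) = 1 / (2 * (Real.pi : ℂ)) := by push_cast; ring
      rw [hco]
      field_simp
      congr 1
      funext y
      rw [mul_comm (y : ℂ) I]
    rw [← this]
    apply integral_congr_ae
    filter_upwards with τ
    rw [smul_eq_mul]
    push_cast
    ring
  -- assemble
  refine ⟨hint, hfin, ?_⟩
  rw [hswap]
  have hterm : ∀ k : ℕ, (∫ τ : ℝ, F k τ)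
      = (Real.log x : ℂ) * ((2 * Real.pi : ℂ) * g (x ^ (k + 1))) := by
    intro k
    rw [hFdef]
    rw [integral_const_mul]
    congr 1
    rw [← hinv k]
    apply integral_congr_ae
    filter_upwards with τ
    rw [hpow τ k]
  rw [tsum_congr hterm, tsum_mul_left, tsum_mul_left]
  have h2π : (2 * (Real.pi : ℂ)) ≠ 0 := by
    simp [Real.pi_ne_zero]
  field_simp
end
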